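/- Let M ≥ 1 and let χ̃ ∈ W_M^+ with χ̃(−1) = −1. Let ρ > 0, let (Ω, 𝒜, μ) be a measure space with μ(Ω) ≤ 2ρ, and let f: Ω → [0,∞) be measurable. Then ρ⁻¹·∫_Ω f dμ ≤ 2·(ρ⁻¹·∫_Ω (−χ̃(−f)) dμ)^{1/M} + ρ⁻¹·∫_Ω (−χ̃(−f)) dμ (as an inequality in [0,∞]). -/

import Mathlib

/-!
Write `g = -χ̃(-f)`; pointwise `f ≤ g ^ (1/M) + g`. Where `f ≥ 1` this is `g ≥ f`, the chord
inequality of the concave `χ̃` through `(-1, -1)` and `(0, 0)`. Where `f ≤ 1` it is `g ≥ f ^ M`: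
the differential inequality `(-x) χ̃'(x) ≤ -M χ̃(x)` makes `χ̃(x) (-x) ^ (-M)` nonincreasing on
`[-1, 0)`. As `χ̃` is only differentiable almost everywhere, the inequality is first transferred to
the right derivative, approximating each point from the left by points of differentiability.
Integrating against `ν = ρ⁻¹ μ`, a measure of mass at most `2`, Hölder's inequality gives
`∫ g ^ (1/M) dν ≤ (∫ g dν) ^ (1/M) ν(Ω) ^ (1 - 1/M) ≤ 2 (∫ g dν) ^ (1/M)`.
-/

open MeasureTheory Filter Set

noncomputable section

/-- The class `W_M^+` of concave, increasing weights `χ : (-∞,0] → (-∞,0]` with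
`χ(0) = 0`, `χ < 0` on `(-∞,0)`, and `|t·χ'(t)| ≤ M·|χ(t)|` at every point `t < 0`
where `χ` is differentiable. -/
def WMPlus (M : ℝ) (χ : ℝ → ℝ) : Prop :=
  ConcaveOn ℝ (Set.Iic 0) χ ∧ StrictMonoOn χ (Set.Iic 0) ∧ (∀ t ≤ (0:ℝ), χ t ≤ 0) ∧
    χ 0 = 0 ∧ (∀ t < (0:ℝ), χ t < 0) ∧
    ∀ t < (0:ℝ), ∀ d : ℝ, HasDerivAt χ d t → |t * d| ≤ M * |χ t|

open scoped ENNReal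

theorem MonotoneOn.dense_setOf_differentiableAt {f : ℝ → ℝ} {S : Set ℝ} (hf : MonotoneOn f S)
    (hS : IsOpen S) : Dense {x | x ∈ S → DifferentiableAt ℝ f x} := by
  refine Measure.dense_of_ae (μ := volume) ?_
  filter_upwards [hf.ae_differentiableWithinAt_of_mem] with x hx hxS
  exact (hx hxS).differentiableAt (hS.mem_nhds hxS)

theorem ConcaveOn.rightDeriv_le_slope_of_lt {S : Set ℝ} {f : ℝ → ℝ} {s x : ℝ}
    (hf : ConcaveOn ℝ S f) (hs : s ∈ S) (hx : x ∈ interior S) (hsx : s < x) :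
    derivWithin f (Ioi x) x ≤ slope f s x := by
  have h := hf.neg.leftDeriv_le_rightDeriv_of_mem_interior hx
  rw [derivWithin.neg, derivWithin.neg, neg_le_neg_iff] at h
  exact h.trans (hf.leftDeriv_le_slope hs (interior_subset hx) hsx
    (by simpa using (hf.neg.differentiableWithinAt_Iio_of_mem_interior hx).neg))

theorem ConcaveOn.rightDeriv_le_of_dense {S : Set ℝ} {f g : ℝ → ℝ} {x : ℝ}
    (hf : ConcaveOn ℝ S f) (hS : IsOpen S) (hx : x ∈ S)
    (hdense : Dense {s | s ∈ S → DifferentiableAt ℝ f s}) (hg : ContinuousAt g x)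
    (hfg : ∀ s ∈ S, ∀ d, HasDerivAt f d s → d ≤ g s) :
    derivWithin f (Ioi x) x ≤ g x := by
  set T := S ∩ Iio x ∩ {s | s ∈ S → DifferentiableAt ℝ f s}
  have hxT : x ∈ closure T := by
    obtain ⟨a, hax, hS'⟩ := exists_Ioc_subset_of_mem_nhds (hS.mem_nhds hx) ⟨x - 1, by linarith⟩
    have h1 : Ioo a x ⊆ closure T :=
      fun y hy ↦ hdense.open_subset_closure_inter (hS.inter isOpen_Iio)
        ⟨hS' (Ioo_subset_Ioc_self hy), hy.2⟩
    have h2 := closure_mono h1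
    rw [closure_closure, closure_Ioo hax.ne] at h2
    exact h2 (right_mem_Icc.mpr hax.le)
  refine ContinuousWithinAt.closure_le (f := fun _ ↦ derivWithin f (Ioi x) x) hxT
    continuousWithinAt_const hg.continuousWithinAt ?_
  rintro s ⟨⟨hsS, hsx⟩, hsd⟩
  have hd := (hsd hsS).hasDerivAt
  calc derivWithin f (Ioi x) x ≤ slope f s x :=
        hf.rightDeriv_le_slope_of_lt hsS (by rwa [hS.interior_eq]) hsx
    _ ≤ deriv f s := hf.slope_le_of_hasDerivAt hsS hx hsx hd
    _ ≤ g s := hfg s hsS _ hd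

theorem ConcaveOn.le_self_of_le_neg_one {f : ℝ → ℝ} (hf : ConcaveOn ℝ (Iic 0) f) (h0 : f 0 = 0)
    (h1 : f (-1) = -1) {t : ℝ} (ht : t ≤ -1) : f t ≤ t := by
  rcases ht.eq_or_lt with rfl | ht
  · exact h1.le
  have h := hf.slope_anti_adjacent (x := t) (y := -1) (z := 0) (by simp; linarith) (by simp) ht
    (by norm_num)
  rw [h0, h1, le_div_iff₀ (by linarith)] at h
  linarith

theorem hasDerivAt_neg_rpow_neg {M x : ℝ} (hx : x < 0) :
    HasDerivAt (fun t : ℝ ↦ (-t) ^ (-M)) (M * (-x) ^ (-M - 1)) x :=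
  ((Real.hasDerivAt_rpow_const (p := -M) (Or.inl (neg_ne_zero.mpr hx.ne))).comp x
    (hasDerivAt_neg x)).congr_deriv (by ring)

theorem MonotoneOn.measurable_comp_of_le {α : Type*} [MeasurableSpace α] {φ : ℝ → ℝ} {c : ℝ}
    (hφ : MonotoneOn φ (Iic c)) {h : α → ℝ} (hh : Measurable h) (hc : ∀ a, h a ≤ c) :
    Measurable fun a ↦ φ (h a) := by
  have hmono : Monotone fun s ↦ φ (min s c) := fun a b hab ↦
    hφ (min_le_right a c) (min_le_right b c) (min_le_min_right c hab)
  convert hmono.measurable.comp hh using 2 with a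
  simp [min_eq_left (hc a)]

theorem ENNReal.lintegral_rpow_le {α : Type*} [MeasurableSpace α] (μ : Measure α) {p : ℝ}
    (hp0 : 0 < p) (hp1 : p ≤ 1) {g : α → ℝ≥0∞} (hg : AEMeasurable g μ) :
    ∫⁻ a, g a ^ p ∂μ ≤ (∫⁻ a, g a ∂μ) ^ p * μ univ ^ (1 - p) := by
  rcases hp1.eq_or_lt with rfl | hp1
  · simp
  have hpq : (1 / p).HolderConjugate (1 / (1 - p)) := by
    rw [Real.holderConjugate_iff]
    exact ⟨(one_lt_div hp0).mpr hp1, by simp⟩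
  have h := ENNReal.lintegral_mul_le_Lp_mul_Lq μ hpq (hg.pow_const p) aemeasurable_const
    (g := fun _ ↦ 1)
  simpa [← ENNReal.rpow_mul, hp0.ne'] using h

theorem lintegral_le_two_mul_rpow_add {α : Type*} [MeasurableSpace α] {ν : Measure α}
    (hν : ν univ ≤ 2) {p : ℝ} (hp0 : 0 < p) (hp1 : p ≤ 1) {f g : α → ℝ≥0∞}
    (hg : AEMeasurable g ν) (hfg : ∀ a, f a ≤ g a ^ p + g a) :
    ∫⁻ a, f a ∂ν ≤ 2 * (∫⁻ a, g a ∂ν) ^ p + ∫⁻ a, g a ∂ν := by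
  have h2 : ν univ ^ (1 - p) ≤ 2 :=
    calc ν univ ^ (1 - p) ≤ 2 ^ (1 - p) := ENNReal.rpow_le_rpow hν (by linarith)
      _ ≤ 2 ^ (1 : ℝ) := ENNReal.rpow_le_rpow_of_exponent_le (by norm_num) (by linarith)
      _ = 2 := ENNReal.rpow_one 2
  calc ∫⁻ a, f a ∂ν ≤ ∫⁻ a, (g a ^ p + g a) ∂ν := lintegral_mono hfg
    _ = ∫⁻ a, g a ^ p ∂ν + ∫⁻ a, g a ∂ν := lintegral_add_left' (hg.pow_const p) _
    _ ≤ (∫⁻ a, g a ∂ν) ^ p * ν univ ^ (1 - p) + ∫⁻ a, g a ∂ν := by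
      gcongr; exact ENNReal.lintegral_rpow_le ν hp0 hp1 hg
    _ ≤ 2 * (∫⁻ a, g a ∂ν) ^ p + ∫⁻ a, g a ∂ν := by
      rw [mul_comm]; gcongr

namespace WMPlus

variable {M : ℝ} {χ : ℝ → ℝ}

theorem neg_mul_rightDeriv_le (hχ : WMPlus M χ) {x : ℝ} (hx : x < 0) :
    -x * derivWithin χ (Ioi x) x ≤ M * -χ x := by
  obtain ⟨hconc, hmono, -, -, hneg, hder⟩ := hχ
  have hconc' : ConcaveOn ℝ (Iio 0) χ := hconc.subset Iio_subset_Iic_self (convex_Iio 0)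
  have hcont : ContinuousAt χ x :=
    hconc'.continuousOn_interior.continuousAt (by rw [interior_Iio]; exact Iio_mem_nhds hx)
  have hbound : derivWithin χ (Ioi x) x ≤ M * -χ x / -x := by
    refine hconc'.rightDeriv_le_of_dense (g := fun s ↦ M * -χ s / -s) isOpen_Iio hx
      ((hmono.monotoneOn.mono Iio_subset_Iic_self).dense_setOf_differentiableAt isOpen_Iio)
      ((continuousAt_const.mul hcont.neg).div continuousAt_neg (neg_ne_zero.mpr hx.ne)) ?_
    intro s hs d hd
    have h := hder s hs d hd
    rw [abs_mul, abs_of_neg hs, abs_of_neg (hneg s hs)] at h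
    rw [le_div_iff₀ (neg_pos.mpr hs)]
    nlinarith [mul_le_mul_of_nonneg_left (le_abs_self d) (neg_pos.mpr hs).le]
  rwa [le_div_iff₀ (neg_pos.mpr hx), mul_comm] at hbound

theorem le_neg_rpow (hχ : WMPlus M χ) (hnorm : χ (-1) = -1) {t : ℝ} (ht1 : -1 ≤ t)
    (ht0 : t < 0) : χ t ≤ -(-t) ^ M := by
  have hneg : ∀ x ∈ Icc (-1) t, x < 0 := fun x hx ↦ hx.2.trans_lt ht0
  have hcont : ContinuousOn χ (Iio 0) := by
    simpa using hχ.1.continuousOn_interior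
  -- `ψ' = (-x) ^ (-M - 1) * ((-x) χ'₊(x) + M χ(x)) ≤ 0`
  set ψ : ℝ → ℝ := fun x ↦ χ x * (-x) ^ (-M)
  have hψ : ∀ x ∈ Icc (-1) t, ψ x ≤ -1 := by
    refine image_le_of_deriv_right_le_deriv_boundary (f' := fun x ↦
      derivWithin χ (Ioi x) x * (-x) ^ (-M) + χ x * (M * (-x) ^ (-M - 1))) ?_ ?_ ?_
      continuousOn_const (fun x _ ↦ hasDerivWithinAt_const x _ (-1)) ?_
    · exact (hcont.mono fun x hx ↦ hneg x hx).mul (continuousOn_neg.rpow_const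
        fun x hx ↦ Or.inl (neg_ne_zero.mpr (hneg x hx).ne))
    · intro x hx
      have hx0 := hneg x (Ico_subset_Icc_self hx)
      have hd : DifferentiableWithinAt ℝ χ (Ioi x) x := by
        simpa using (hχ.1.neg.differentiableWithinAt_Ioi_of_mem_interior (by simpa using hx0)).neg
      exact (hasDerivWithinAt_Ioi_iff_Ici.mp hd.hasDerivWithinAt).mul
        (hasDerivAt_neg_rpow_neg hx0).hasDerivWithinAt
    · simp [ψ, hnorm]
    · intro x hx
      have hx0 := hneg x (Ico_subset_Icc_self hx)
      have hpow : (-x) ^ (-M) = (-x) ^ (-M - 1) * -x := by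
        rw [← Real.rpow_add_one (neg_ne_zero.mpr hx0.ne)]; ring_nf
      rw [hpow]
      have := hχ.neg_mul_rightDeriv_le hx0
      have := Real.rpow_nonneg (neg_nonneg.mpr hx0.le) (-M - 1)
      nlinarith
  have h := hψ t (right_mem_Icc.mpr ht1)
  simp only [ψ, Real.rpow_neg (neg_nonneg.mpr ht0.le)] at h
  rwa [← div_eq_mul_inv, div_le_iff₀ (Real.rpow_pos_of_pos (neg_pos.mpr ht0) M), neg_one_mul]
    at h

theorem ofReal_le_rpow_add (hχ : WMPlus M χ) (hM : 0 < M) (hnorm : χ (-1) = -1) {s : ℝ}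
    (hs : 0 ≤ s) :
    ENNReal.ofReal s ≤ ENNReal.ofReal (-χ (-s)) ^ (1 / M) + ENNReal.ofReal (-χ (-s)) := by
  have hχs : 0 ≤ -χ (-s) := neg_nonneg.mpr (hχ.2.2.1 _ (by linarith))
  rcases le_or_gt s 1 with hs1 | hs1
  · refine le_add_right ?_
    rw [ENNReal.ofReal_rpow_of_nonneg hχs (by positivity)]
    refine ENNReal.ofReal_le_ofReal ?_
    rcases hs.eq_or_lt with rfl | hs0
    · positivity
    have h := hχ.le_neg_rpow hnorm (t := -s) (by linarith) (by linarith)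
    rw [neg_neg] at h
    calc s = (s ^ M) ^ (1 / M) := by
          rw [← Real.rpow_mul hs, mul_one_div_cancel hM.ne', Real.rpow_one]
      _ ≤ (-χ (-s)) ^ (1 / M) := by gcongr; linarith
  · refine le_add_left (ENNReal.ofReal_le_ofReal ?_)
    linarith [hχ.1.le_self_of_le_neg_one hχ.2.2.2.1 hnorm (t := -s) (by linarith)]

end WMPlus

theorem stmt13 (M : ℝ) (hM : 1 ≤ M) (χt : ℝ → ℝ) (hχt : WMPlus M χt)
    (hnorm : χt (-1) = -1) (ρ : ℝ) (hρ : 0 < ρ)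
    {Ω : Type*} [MeasurableSpace Ω] (μ : Measure Ω)
    (hμ : μ Set.univ ≤ ENNReal.ofReal (2 * ρ))
    (f : Ω → ℝ) (hf_meas : Measurable f) (hf_nonneg : ∀ x, 0 ≤ f x) :
    ENNReal.ofReal ρ⁻¹ * ∫⁻ x, ENNReal.ofReal (f x) ∂μ
      ≤ 2 * (ENNReal.ofReal ρ⁻¹ * ∫⁻ x, ENNReal.ofReal (-(χt (-(f x)))) ∂μ) ^ (1 / M)
        + ENNReal.ofReal ρ⁻¹ * ∫⁻ x, ENNReal.ofReal (-(χt (-(f x)))) ∂μ := by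
  have hM0 : 0 < M := by linarith
  have hν : (ENNReal.ofReal ρ⁻¹ • μ) univ ≤ 2 :=
    calc (ENNReal.ofReal ρ⁻¹ • μ) univ ≤ ENNReal.ofReal ρ⁻¹ * ENNReal.ofReal (2 * ρ) :=
          mul_le_mul_right hμ _
      _ = 2 := by
        rw [← ENNReal.ofReal_mul (by positivity), show ρ⁻¹ * (2 * ρ) = 2 by field_simp,
          ENNReal.ofReal_ofNat]
  have hg : Measurable fun x ↦ ENNReal.ofReal (-χt (-f x)) :=
    ENNReal.measurable_ofReal.comp (hχt.2.1.monotoneOn.measurable_comp_of_le hf_meas.neg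
      fun x ↦ neg_nonpos.mpr (hf_nonneg x)).neg
  have hscale : ∀ g : Ω → ℝ≥0∞,
      ENNReal.ofReal ρ⁻¹ * ∫⁻ x, g x ∂μ = ∫⁻ x, g x ∂(ENNReal.ofReal ρ⁻¹ • μ) :=
    fun g ↦ by rw [lintegral_smul_measure, smul_eq_mul]
  simp only [hscale]
  exact lintegral_le_two_mul_rpow_add hν (by positivity) ((div_le_one hM0).mpr hM)
    hg.aemeasurable fun x ↦ hχt.ofReal_le_rpow_add hM0 hnorm (hf_nonneg x)
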